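/- Hexagon quadratic identity (second identity of the hexagon proposition): for every integer n there exists a real constant c (depending only on n) such that for every real r, Σ_{i+j=n} J_{3i}(r) J_{−3j}(r) = (1/3)·δ_{n,0} + c·J_{3n}(√3·r), where δ_{n,0} = 1 if n = 0 and 0 otherwise. In particular, the convolutional sum differs from (1/3)δ_{n,0} only by a term oscillating with the irrational frequency √3. -/

import Mathlib

/-- Bessel function of the first kind of integer order `n`, defined via the
Hansen--Bessel formula. -/
noncomputable def besselJ (n : ℤ) (r : ℝ) : ℝ :=
  ((2 * Real.pi : ℂ)⁻¹ * ∫ θ in (0:ℝ)..(2 * Real.pi),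
    Complex.exp (Complex.I * ((r * Real.cos θ - (n : ℝ) * (θ + Real.pi / 2) : ℝ) : ℂ))).re

/-!
On `[0, 2π]` the Fourier coefficients of `θ ↦ exp (i r cos θ)` are `iᵐ Jₘ(r)`. Parseval's identity
for `θ ↦ e^{ikθ} exp (i r cos θ)` and the translate `θ ↦ exp (i r cos (θ + α))`, together with
`cos (θ + α) - cos θ = 2 sin (α/2) cos (θ + (α + π)/2)`, gives the Graf-type addition formula
`∑ₘ e^{imα} Jₘ(r) J_{m-k}(r) = e^{ik(α+π)/2} J_k(2 r sin (α/2))`.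
Averaging it over `α ∈ {0, 2π/3, 4π/3}` keeps exactly the terms with `3 ∣ m`. For `k = 3n` the
value at `α = 0` is `J_{3n}(0) = δ_{n,0}`, and the other two values add up to
`2 cos (nπ/2) J_{3n}(√3 r)`.
-/

open Complex MeasureTheory Function Set
open scoped Real ComplexConjugate

theorem intervalIntegral.integral_conj {f : ℝ → ℂ} {a b : ℝ} :
    ∫ x in a..b, conj (f x) = conj (∫ x in a..b, f x) := by
  simp only [intervalIntegral, _root_.integral_conj, map_sub]

theorem hasSum_conj_fourierCoeffOn_mul {a b : ℝ} {f g : ℝ → ℂ} (hab : a < b)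
    (hf : MemLp f 2 (volume.restrict (Ioc a b))) (hg : MemLp g 2 (volume.restrict (Ioc a b))) :
    HasSum (fun i => conj (fourierCoeffOn hab f i) * fourierCoeffOn hab g i)
      ((b - a)⁻¹ • ∫ x in a..b, conj (f x) * g x) := by
  have := Fact.mk (by linarith : 0 < b - a)
  rw [← add_sub_cancel a b] at hf hg
  have hf' := hf.memLp_liftIoc.haarAddCircle
  have hg' := hg.memLp_liftIoc.haarAddCircle
  have coeff {h : ℝ → ℂ} (hh : MemLp (AddCircle.liftIoc (b - a) a h) 2 AddCircle.haarAddCircle)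
      (i : ℤ) : inner ℂ (fourierBasis i) hh.toLp = fourierCoeffOn hab h i := by
    rw [← fourierBasis.repr_apply_apply, fourierBasis_repr, fourierCoeff_congr_ae hh.coeFn_toLp,
      fourierCoeffOn]
  have key := fourierBasis.hasSum_inner_mul_inner hf'.toLp hg'.toLp
  simp_rw [← inner_conj_symm hf'.toLp, coeff] at key
  rw [inner_conj_symm, L2.inner_def] at key
  convert key using 1
  · rfl
  nth_rw 2 [← add_sub_cancel a b]
  rw [← AddCircle.integral_liftIoc_eq_intervalIntegral, ← AddCircle.integral_haarAddCircle]
  refine integral_congr_ae ?_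
  filter_upwards [hf'.coeFn_toLp, hg'.coeFn_toLp] with x hfx hgx
  rw [RCLike.inner_apply', hfx, hgx]
  rfl

lemma periodic_exp_int_mul_I (n : ℤ) : Periodic (fun x : ℝ => exp (n * x * I)) (2 * π) :=
  fun _ => exp_eq_exp_iff_exists_int.2 ⟨n, by push_cast; ring⟩

lemma fourierCoeffOn_two_pi_eq_integral (f : ℝ → ℂ) (n : ℤ) :
    fourierCoeffOn Real.two_pi_pos f n =
      (2 * π : ℂ)⁻¹ * ∫ x in (0 : ℝ)..2 * π, exp (-n * x * I) * f x := by
  rw [fourierCoeffOn_eq_integral, sub_zero, real_smul, one_div]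
  push_cast
  congr 1
  refine intervalIntegral.integral_congr fun (x : ℝ) _ => ?_
  rw [fourier_coe_apply, smul_eq_mul]
  congr 2
  field_simp
  push_cast
  ring

lemma fourierCoeffOn_two_pi_exp_mul (f : ℝ → ℂ) (k n : ℤ) :
    fourierCoeffOn Real.two_pi_pos (fun x => exp (k * x * I) * f x) n =
      fourierCoeffOn Real.two_pi_pos f (n - k) := by
  simp only [fourierCoeffOn_two_pi_eq_integral]
  congr 1
  refine intervalIntegral.integral_congr fun (x : ℝ) _ => ?_
  rw [← mul_assoc, ← exp_add]
  push_cast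
  ring_nf

lemma fourierCoeffOn_two_pi_comp_add_right {f : ℝ → ℂ} (hf : Periodic f (2 * π)) (α : ℝ)
    (n : ℤ) :
    fourierCoeffOn Real.two_pi_pos (fun x => f (x + α)) n =
      exp (n * α * I) * fourierCoeffOn Real.two_pi_pos f n := by
  have hper : Periodic (fun x : ℝ => exp (-n * x * I) * f x) (2 * π) := by
    simpa using (periodic_exp_int_mul_I (-n)).mul hf
  have hshift : ∀ x : ℝ, exp (-n * x * I) * f (x + α) =
      exp (n * α * I) * (exp (-n * ↑(x + α) * I) * f (x + α)) := by
    intro x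
    rw [← mul_assoc, ← exp_add]
    push_cast
    ring_nf
  simp only [fourierCoeffOn_two_pi_eq_integral, hshift, intervalIntegral.integral_const_mul,
    intervalIntegral.integral_comp_add_right (fun x => exp (-n * x * I) * f x)]
  rw [zero_add, add_comm _ α, hper.intervalIntegral_add_eq α 0, zero_add]
  ring

noncomputable def expICos (r θ : ℝ) : ℂ := exp (↑(r * Real.cos θ) * I)

lemma norm_expICos (r θ : ℝ) : ‖expICos r θ‖ = 1 := norm_exp_ofReal_mul_I _

@[fun_prop]
lemma continuous_expICos (r : ℝ) : Continuous (expICos r) := by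
  unfold expICos
  fun_prop

lemma periodic_expICos (r : ℝ) : Periodic (expICos r) (2 * π) := by
  intro θ
  simp only [expICos, Real.cos_add_two_pi]

lemma ofReal_besselJ (m : ℤ) (r : ℝ) :
    (besselJ m r : ℂ) = (2 * π : ℂ)⁻¹ *
      ∫ θ in (0 : ℝ)..2 * π, exp (I * ↑(r * Real.cos θ - m * (θ + π / 2))) := by
  set F : ℝ → ℂ := fun θ => exp (I * ↑(r * Real.cos θ - m * (θ + π / 2)))
  have hper : Periodic F (2 * π) := fun θ =>
    exp_eq_exp_iff_exists_int.2 ⟨-m, by rw [Real.cos_add_two_pi]; push_cast; ring⟩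
  -- the reflection `θ ↦ π - θ` conjugates the integrand
  have hrefl : ∀ θ, conj (F θ) = F (π - θ) := fun θ => by
    rw [← exp_conj]
    exact exp_eq_exp_iff_exists_int.2 ⟨m, by
      rw [Real.cos_pi_sub]; simp only [map_mul, conj_I, conj_ofReal]; push_cast; ring⟩
  have hconj : conj (∫ θ in (0 : ℝ)..2 * π, F θ) = ∫ θ in (0 : ℝ)..2 * π, F θ := by
    rw [← intervalIntegral.integral_conj]
    simp_rw [hrefl]
    rw [intervalIntegral.integral_comp_sub_left F π]
    convert hper.intervalIntegral_add_eq (-π) 0 using 1 <;> ring_nf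
  rw [besselJ]
  refine conj_eq_iff_re.mp ?_
  rw [map_mul, hconj, map_inv₀, map_mul, map_ofNat, conj_ofReal]

lemma fourierCoeffOn_expICos (r : ℝ) (m : ℤ) :
    fourierCoeffOn Real.two_pi_pos (expICos r) m = exp (m * (π / 2) * I) * besselJ m r := by
  have hphase (θ : ℝ) : exp (I * ↑(r * Real.cos θ - m * (θ + π / 2))) =
      exp (-(m * (π / 2) * I)) * (exp (-m * θ * I) * expICos r θ) := by
    rw [expICos, ← exp_add, ← exp_add]
    push_cast
    ring_nf
  simp only [ofReal_besselJ, hphase, intervalIntegral.integral_const_mul,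
    fourierCoeffOn_two_pi_eq_integral]
  rw [exp_neg, mul_left_comm, mul_inv_cancel_left₀ (exp_ne_zero _)]

lemma besselJ_zero_right (k : ℤ) : besselJ k 0 = if k = 0 then 1 else 0 := by
  have h := fourierCoeffOn_expICos 0 k
  simp only [expICos, zero_mul, ofReal_zero, exp_zero, fourierCoeffOn_two_pi_eq_integral, mul_one] at h
  split_ifs with hk
  · subst hk
    simp only [Int.cast_zero, neg_zero, zero_mul, exp_zero, one_mul,
      intervalIntegral.integral_const, sub_zero, real_smul, mul_one] at h
    have : (besselJ 0 0 : ℂ) = 1 := by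
      rw [← h]
      push_cast
      field_simp
    exact_mod_cast this
  · have hc : -k * I ≠ 0 := by simp [hk]
    have hint : ∫ x in (0 : ℝ)..2 * π, exp (-k * x * I) = 0 := by
      simp_rw [show ∀ x : ℝ, -(k : ℂ) * x * I = -k * I * x from fun x => by ring]
      rw [integral_exp_mul_complex hc, show -k * I * ↑(2 * π) = (-k : ℤ) * (2 * π * I) by
        push_cast; ring, exp_int_mul_two_pi_mul_I]
      simp
    rw [hint, mul_zero, eq_comm, mul_eq_zero] at h
    exact_mod_cast h.resolve_left (exp_ne_zero _)

lemma conj_expICos_mul_expICos_add (r x α : ℝ) :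
    conj (expICos r x) * expICos r (x + α) =
      expICos (2 * r * Real.sin (α / 2)) (x + (α + π) / 2) := by
  have h : Real.cos (x + α) - Real.cos x = 2 * Real.sin (α / 2) * Real.cos (x + (α + π) / 2) := by
    rw [Real.cos_sub_cos, show x + (α + π) / 2 = (x + α + x) / 2 + π / 2 by ring,
      Real.cos_add_pi_div_two, show (x + α - x) / 2 = α / 2 by ring]
    ring
  simp only [expICos, ← exp_conj, map_mul, conj_ofReal, conj_I, ← exp_add]
  have h' := congrArg ((↑) : ℝ → ℂ) h
  push_cast at h' ⊢
  congr 1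
  linear_combination (r * I) * h'

theorem hasSum_exp_mul_besselJ_mul_besselJ_sub (r α : ℝ) (k : ℤ) :
    HasSum (fun m : ℤ => exp (m * α * I) * (besselJ m r * besselJ (m - k) r))
      (exp (k * ((α + π) / 2) * I) * besselJ k (2 * r * Real.sin (α / 2))) := by
  have memLp_of_norm_eq_one {f : ℝ → ℂ} (hf : Continuous f) (h1 : ∀ x, ‖f x‖ = 1) :
      MemLp f 2 (volume.restrict (Ioc 0 (2 * π))) :=
    MemLp.of_bound hf.aestronglyMeasurable 1 (ae_of_all _ fun x => (h1 x).le)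
  have H := hasSum_conj_fourierCoeffOn_mul Real.two_pi_pos
    (f := fun x => exp (k * x * I) * expICos r x) (g := fun x => expICos r (x + α))
    (memLp_of_norm_eq_one (by fun_prop) fun x => by simp [norm_exp, norm_expICos])
    (memLp_of_norm_eq_one (by fun_prop) fun x => norm_expICos r _)
  have hval : (2 * π - 0)⁻¹ • ∫ x in (0 : ℝ)..2 * π,
      conj (exp (k * x * I) * expICos r x) * expICos r (x + α) =
      fourierCoeffOn Real.two_pi_pos
        (fun x => expICos (2 * r * Real.sin (α / 2)) (x + (α + π) / 2)) k := by
    rw [fourierCoeffOn_two_pi_eq_integral, sub_zero, real_smul]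
    push_cast
    congr 1
    refine intervalIntegral.integral_congr fun (x : ℝ) _ => ?_
    rw [map_mul, mul_assoc, conj_expICos_mul_expICos_add, ← exp_conj]
    simp only [map_mul, conj_ofReal, conj_I, map_intCast]
    ring_nf
  simp only [fourierCoeffOn_two_pi_exp_mul, fourierCoeffOn_expICos, hval,
    fourierCoeffOn_two_pi_comp_add_right (periodic_expICos _)] at H
  rw [← hasSum_mul_left_iff (exp_ne_zero (k * (π / 2) * I))]
  convert H using 1
  · rfl
  · ext m
    have e : exp (k * (π / 2) * I) =
        exp (conj ((m - k : ℤ) * (π / 2) * I)) * exp (m * (π / 2) * I) := by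
      rw [← exp_add]
      simp only [map_mul, map_div₀, map_ofNat, conj_ofReal, conj_I, map_intCast]
      push_cast
      ring_nf
    rw [map_mul, conj_ofReal, ← exp_conj, e]
    ring
  · push_cast
    ring

theorem IsPrimitiveRoot.geom_sum_zpow {K : Type*} [Field K] {ζ : K} {N : ℕ}
    (hζ : IsPrimitiveRoot ζ N) (m : ℤ) :
    ∑ j ∈ Finset.range N, (ζ ^ m) ^ j = if (N : ℤ) ∣ m then (N : K) else 0 := by
  split_ifs with h
  · simp [(hζ.zpow_eq_one_iff_dvd m).2 h]
  · have hpow : (ζ ^ m) ^ N = 1 := by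
      rw [← zpow_natCast, ← zpow_mul, mul_comm, zpow_mul, zpow_natCast, hζ.pow_eq_one, one_zpow]
    rw [geom_sum_eq (mt (hζ.zpow_eq_one_iff_dvd m).1 h), hpow, sub_self, zero_div]

theorem hasSum_besselJ_mul_besselJ_sub_multisection (r : ℝ) (k : ℤ) {N : ℕ} (hN : N ≠ 0) :
    HasSum (fun i : ℤ => (N : ℂ) * (besselJ (N * i) r * besselJ (N * i - k) r))
      (∑ j ∈ Finset.range N, exp (k * ((2 * π * j / N + π) / 2) * I) *
        besselJ k (2 * r * Real.sin (π * j / N))) := by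
  have H := hasSum_sum (s := Finset.range N) fun j _ =>
    hasSum_exp_mul_besselJ_mul_besselJ_sub r (2 * π * j / N) k
  have hweight (m : ℤ) : ∑ j ∈ Finset.range N, exp (m * ↑(2 * π * j / N) * I) =
      if (N : ℤ) ∣ m then (N : ℂ) else 0 := by
    rw [← (isPrimitiveRoot_exp N hN).geom_sum_zpow m]
    refine Finset.sum_congr rfl fun j _ => ?_
    rw [← exp_int_mul, ← exp_nat_mul]
    push_cast
    ring_nf
  simp_rw [← Finset.sum_mul, hweight] at H
  have hinj : Injective fun i : ℤ => (N : ℤ) * i := mul_right_injective₀ (by exact_mod_cast hN)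
  have hvanish : ∀ m ∉ Set.range fun i : ℤ => (N : ℤ) * i,
      (if (N : ℤ) ∣ m then (N : ℂ) else 0) * (besselJ m r * besselJ (m - k) r) = 0 := by
    rintro m hm
    rw [if_neg fun ⟨i, hi⟩ => hm ⟨i, hi.symm⟩, zero_mul]
  convert (hinj.hasSum_iff hvanish).mpr H using 1
  · ext i
    simp
  · refine Finset.sum_congr rfl fun j _ => ?_
    push_cast
    ring_nf

lemma sum_hexagon_terms (r : ℝ) (n : ℤ) :
    ∑ j ∈ Finset.range 3, exp ((3 * n : ℤ) * ((2 * π * j / (3 : ℕ) + π) / 2) * I) *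
        besselJ (3 * n) (2 * r * Real.sin (π * j / (3 : ℕ))) =
      ((if n = 0 then 1 else 0) + 2 * Real.cos (n * π / 2) * besselJ (3 * n) (√3 * r) : ℝ) := by
  have hsin₁ : 2 * r * Real.sin (π * (1 : ℕ) / (3 : ℕ)) = √3 * r := by
    push_cast
    rw [mul_one, Real.sin_pi_div_three]
    ring
  have hsin₂ : 2 * r * Real.sin (π * (2 : ℕ) / (3 : ℕ)) = √3 * r := by
    push_cast
    rw [show π * 2 / 3 = π - π / 3 by ring, Real.sin_pi_sub, Real.sin_pi_div_three]
    ring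
  have hδ : exp ((3 * n : ℤ) * ((2 * π * (0 : ℕ) / (3 : ℕ) + π) / 2) * I) *
      besselJ (3 * n) (2 * r * Real.sin (π * (0 : ℕ) / (3 : ℕ))) = if n = 0 then 1 else 0 := by
    simp only [Nat.cast_zero, mul_zero, zero_div, Real.sin_zero, besselJ_zero_right]
    by_cases hn : n = 0 <;> simp [hn]
  have hcos : exp ((3 * n : ℤ) * ((2 * π * (1 : ℕ) / (3 : ℕ) + π) / 2) * I) +
      exp ((3 * n : ℤ) * ((2 * π * (2 : ℕ) / (3 : ℕ) + π) / 2) * I) = 2 * Real.cos (n * π / 2) := by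
    rw [ofReal_cos, two_cos]
    congr 1 <;> refine exp_eq_exp_iff_exists_int.2 ⟨?_, ?_⟩
    exacts [n, by push_cast; ring, 2 * n, by push_cast; ring]
  rw [Finset.sum_range_succ, Finset.sum_range_succ, Finset.sum_range_one, hδ, hsin₁, hsin₂,
    add_assoc, ← add_mul, hcos]
  split_ifs <;> push_cast <;> ring

/-- Hexagon quadratic identity with Kronecker delta and an irrational-frequency remainder. -/
theorem hexagon_quadratic_two (n : ℤ) :
    ∃ c : ℝ, ∀ r : ℝ,
      Summable (fun i : ℤ => besselJ (3 * i) r * besselJ (-(3 * (n - i))) r) ∧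
      (∑' i : ℤ, besselJ (3 * i) r * besselJ (-(3 * (n - i))) r)
        = 1/3 * (if n = 0 then (1:ℝ) else 0) + c * besselJ (3 * n) (Real.sqrt 3 * r) := by
  refine ⟨2 * Real.cos (n * π / 2) / 3, fun r => ?_⟩
  have H := (hasSum_besselJ_mul_besselJ_sub_multisection r (3 * n) three_ne_zero).div_const 3
  rw [sum_hexagon_terms] at H
  have H' : HasSum (fun i : ℤ => besselJ (3 * i) r * besselJ (-(3 * (n - i))) r)
      (1/3 * (if n = 0 then (1:ℝ) else 0) +
        2 * Real.cos (n * π / 2) / 3 * besselJ (3 * n) (Real.sqrt 3 * r)) := by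
    rw [← hasSum_ofReal]
    convert H using 1
    · rfl
    · ext i
      rw [show -(3 * (n - i)) = 3 * i - 3 * n by ring]
      push_cast
      ring
    · split_ifs <;> push_cast <;> ring
  exact ⟨H'.summable, H'.tsum_eq⟩
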